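/- For normal, convex f, g : [0,1] → [0,1], f ⋆ g ⊑ f and f ⋆ g ⊑ g in the partial order ⊑, where h ⊑ k means h ⊓ k = h; in particular, if neither f nor g equals 1_{1}, then f ⋆ g ≠ 1_{1}. -/

import Mathlib

open Set Classical

noncomputable section

/-- Left envelope: `f^L(x) = sup {f y : 0 ≤ y ≤ x}`. -/
def fL (f : ℝ → ℝ) (x : ℝ) : ℝ := sSup (f '' Set.Icc 0 x)

/-- Weak left envelope: `f^{Lw}(x) = sup {f y : 0 ≤ y < x}` (for `x ∈ (0,1]`). -/
def fLw (f : ℝ → ℝ) (x : ℝ) : ℝ := sSup (f '' Set.Ico 0 x)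

/-- Right envelope: `f^R(x) = sup {f y : x ≤ y ≤ 1}`. -/
def fR (f : ℝ → ℝ) (x : ℝ) : ℝ := sSup (f '' Set.Icc x 1)

/-- `f` maps `[0,1]` into `[0,1]`. -/
def MapsI (f : ℝ → ℝ) : Prop := ∀ x ∈ Set.Icc (0:ℝ) 1, f x ∈ Set.Icc (0:ℝ) 1

/-- `f` is normal: `sup f = 1` on `[0,1]`. -/
def NormalFn (f : ℝ → ℝ) : Prop := sSup (f '' Set.Icc 0 1) = 1

/-- `f` is convex: `f y ≥ min (f x) (f z)` whenever `0 ≤ x ≤ y ≤ z ≤ 1`. -/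
def ConvexFn (f : ℝ → ℝ) : Prop :=
  ∀ x y z : ℝ, 0 ≤ x → x ≤ y → y ≤ z → z ≤ 1 → min (f x) (f z) ≤ f y

/-- Convolution intersection: `(f ⊓ g)(x) = sup {min (f y) (g z) : min y z = x}`. -/
def inter (f g : ℝ → ℝ) (x : ℝ) : ℝ :=
  sSup {v | ∃ y ∈ Set.Icc (0:ℝ) 1, ∃ z ∈ Set.Icc (0:ℝ) 1, min y z = x ∧ v = min (f y) (g z)}

/-- Convolution union: `(f ⊔ g)(x) = sup {min (f y) (g z) : max y z = x}`. -/
def union (f g : ℝ → ℝ) (x : ℝ) : ℝ :=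
  sSup {v | ∃ y ∈ Set.Icc (0:ℝ) 1, ∃ z ∈ Set.Icc (0:ℝ) 1, max y z = x ∧ v = min (f y) (g z)}

/-- `L₁(f) = inf {x ∈ [0,1] : f^L(x) = 1}`. -/
def L1 (f : ℝ → ℝ) : ℝ := sInf {x ∈ Set.Icc (0:ℝ) 1 | fL f x = 1}

/-- `R¹(f) = sup {x ∈ [0,1] : f^R(x) = 1}`. -/
def R1 (f : ℝ → ℝ) : ℝ := sSup {x ∈ Set.Icc (0:ℝ) 1 | fR f x = 1}

/-- The characteristic function `1_{{1}}`. -/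
def ind1 : ℝ → ℝ := fun x => if x = 1 then 1 else 0

/-- The modified intersection `f ⋆ g`. -/
def star (f g : ℝ → ℝ) : ℝ → ℝ :=
  if Set.EqOn f ind1 (Set.Icc (0:ℝ) 1) then g
  else if Set.EqOn g ind1 (Set.Icc (0:ℝ) 1) then f
  else if min (f 1) (g 1) = 1 then inter f g
  else fun x => if x = 1 then 0 else inter f g x

/-!
Write `h ⊑ f` for `h ⊓ f = h` on `[0,1]`. For any `h, f : [0,1] → [0,1]` this holds as soon as
`h ≤ f^R` and `min (f x) (h y) ≤ h x` for `x ≤ y`: the pairs `(x, z)` with `z ≥ x` push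
`(h ⊓ f)(x)` up to `min (h x) (f^R x) = h x`, and the second condition caps every other pair.
Both conditions hold for `h = f ⊓ g` (as `min (y, z) ≥ x` forces `y, z ≥ x`), survive setting
`h 1 := 0`, and hold trivially for `h = f` or `f = 1_{1}`; this covers every branch of `f ⋆ g`.
If neither `f` nor `g` is `1_{1}`, then `f ⋆ g` vanishes at `1` or, when `f 1 = g 1 = 1`, is
positive at some point of `[0,1)`.
-/

open Set

lemma min_csSup_le_of_forall {α : Type*} [ConditionallyCompleteLinearOrder α] {S : Set α}
    {a c : α} (hne : S.Nonempty) (hbdd : BddAbove S) (h : ∀ s ∈ S, min a s ≤ c) :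
    min a (sSup S) ≤ c := by
  rcases le_or_gt (sSup S) a with hle | hlt
  · refine (min_le_right _ _).trans (csSup_le hne fun s hs => ?_)
    have hs' := h s hs
    rwa [min_eq_right ((le_csSup hbdd hs).trans hle)] at hs'
  · obtain ⟨s, hs, has⟩ := exists_lt_of_lt_csSup hne hlt
    have hs' := h s hs
    rw [min_eq_left has.le] at hs'
    exact (min_le_left _ _).trans hs'

section Inter

variable {f g h : ℝ → ℝ} {x y z c : ℝ}

def interVals (f g : ℝ → ℝ) (x : ℝ) : Set ℝ :=
  {v | ∃ y ∈ Icc (0:ℝ) 1, ∃ z ∈ Icc (0:ℝ) 1, min y z = x ∧ v = min (f y) (g z)}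

lemma inter_eq_sSup_interVals : inter f g x = sSup (interVals f g x) := rfl

lemma bddAbove_interVals (hf : MapsI f) : BddAbove (interVals f g x) := by
  refine ⟨1, ?_⟩
  rintro v ⟨y, hy, z, -, -, rfl⟩
  exact (min_le_left _ _).trans (hf y hy).2

lemma nonempty_interVals (hx : x ∈ Icc (0:ℝ) 1) : (interVals f g x).Nonempty :=
  ⟨_, x, hx, x, hx, min_self x, rfl⟩

lemma inter_le (hx : x ∈ Icc (0:ℝ) 1)
    (h : ∀ y ∈ Icc (0:ℝ) 1, ∀ z ∈ Icc (0:ℝ) 1, min y z = x → min (f y) (g z) ≤ c) :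
    inter f g x ≤ c := by
  refine csSup_le (nonempty_interVals hx) ?_
  rintro v ⟨y, hy, z, hz, hm, rfl⟩
  exact h y hy z hz hm

lemma le_inter (hf : MapsI f) (hy : y ∈ Icc (0:ℝ) 1) (hz : z ∈ Icc (0:ℝ) 1)
    (hm : min y z = x) : min (f y) (g z) ≤ inter f g x :=
  le_csSup (bddAbove_interVals hf) ⟨y, hy, z, hz, hm, rfl⟩

lemma inter_symm (f g : ℝ → ℝ) : inter f g = inter g f := by
  funext x
  simp only [inter_eq_sSup_interVals, interVals]
  congr 1
  ext v
  constructor <;>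
  · rintro ⟨y, hy, z, hz, hm, rfl⟩
    exact ⟨z, hz, y, hy, by rwa [min_comm], min_comm _ _⟩

lemma mapsI_inter (hf : MapsI f) (hg : MapsI g) : MapsI (inter f g) := fun x hx =>
  ⟨(le_min (hf x hx).1 (hg x hx).1).trans (le_inter hf hx hx (min_self x)),
    inter_le hx fun y hy _ _ _ => (min_le_left _ _).trans (hf y hy).2⟩

lemma bddAbove_image_Icc_one (hf : MapsI f) (hx : 0 ≤ x) : BddAbove (f '' Icc x 1) := by
  refine ⟨1, ?_⟩
  rintro _ ⟨w, hw, rfl⟩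
  exact (hf w ⟨hx.trans hw.1, hw.2⟩).2

lemma apply_le_fR (hf : MapsI f) (hx : x ∈ Icc (0:ℝ) 1) (hz : z ∈ Icc x 1) : f z ≤ fR f x :=
  le_csSup (bddAbove_image_Icc_one hf hx.1) ⟨z, hz, rfl⟩

/-- Sufficient conditions for `inter h f = h` on `[0,1]`, i.e. for `h ⊑ f`. -/
structure AbsorbCond (h f : ℝ → ℝ) : Prop where
  min_le : ∀ x ∈ Icc (0:ℝ) 1, ∀ y ∈ Icc (0:ℝ) 1, x ≤ y → min (f x) (h y) ≤ h x
  le_fR : ∀ x ∈ Icc (0:ℝ) 1, h x ≤ fR f x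

lemma AbsorbCond.inter_eqOn (H : AbsorbCond h f) (hh : MapsI h) (hf : MapsI f) :
    EqOn (inter h f) h (Icc (0:ℝ) 1) := by
  intro x hx
  refine le_antisymm (inter_le hx fun y hy z hz hm => ?_) ?_
  · rcases le_total y z with hyz | hzy
    · rw [min_eq_left hyz] at hm
      exact hm ▸ min_le_left _ _
    · rw [min_eq_right hzy] at hm
      rw [hm, min_comm]
      exact H.min_le x hx y hy (hm ▸ hzy)
  · have hne : (f '' Icc x 1).Nonempty := ⟨f 1, 1, right_mem_Icc.2 hx.2, rfl⟩
    calc h x = min (h x) (fR f x) := (min_eq_left (H.le_fR x hx)).symm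
      _ ≤ inter h f x := by
        refine min_csSup_le_of_forall hne (bddAbove_image_Icc_one hf hx.1) ?_
        rintro _ ⟨z, hz, rfl⟩
        exact le_inter hh hx ⟨hx.1.trans hz.1, hz.2⟩ (min_eq_left hz.1)

lemma absorbCond_self (hf : MapsI f) : AbsorbCond f f :=
  ⟨fun _ _ _ _ _ => min_le_left _ _, fun _ hx => apply_le_fR hf hx ⟨le_rfl, hx.2⟩⟩

lemma absorbCond_of_eqOn_ind1 (hh : MapsI h) (hf : MapsI f) (hfi : EqOn f ind1 (Icc (0:ℝ) 1)) :
    AbsorbCond h f := by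
  have h1 : (1:ℝ) ∈ Icc (0:ℝ) 1 := right_mem_Icc.2 zero_le_one
  refine ⟨fun x hx y hy hxy => ?_, fun x hx => ?_⟩
  · rcases hx.2.eq_or_lt with hx1 | hx1
    · obtain rfl : y = 1 := le_antisymm hy.2 (hx1 ▸ hxy)
      rw [hx1]
      exact min_le_right _ _
    · rw [hfi hx, ind1, if_neg hx1.ne]
      exact (min_le_left _ _).trans (hh x hx).1
  · calc h x ≤ 1 := (hh x hx).2
      _ = f 1 := by rw [hfi h1, ind1, if_pos rfl]
      _ ≤ fR f x := apply_le_fR hf hx ⟨hx.2, le_rfl⟩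

lemma absorbCond_inter_left (hf : MapsI f) : AbsorbCond (inter f g) f := by
  refine ⟨fun x hx y hy hxy => ?_, fun x hx => ?_⟩
  · refine min_csSup_le_of_forall (nonempty_interVals hy) (bddAbove_interVals hf) ?_
    rintro _ ⟨u, -, v, hv, rfl, rfl⟩
    exact (min_le_min le_rfl (min_le_right _ _)).trans
      (le_inter hf hx hv (min_eq_left (hxy.trans (min_le_right u v))))
  · refine inter_le hx fun y hy z _ hm =>
      (min_le_left _ _).trans (apply_le_fR hf hx ⟨?_, hy.2⟩)
    exact hm ▸ min_le_left y z

lemma absorbCond_inter_right (hg : MapsI g) : AbsorbCond (inter f g) g :=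
  inter_symm f g ▸ absorbCond_inter_left hg

end Inter

section DropAtOne

variable {f h : ℝ → ℝ}

def dropAtOne (h : ℝ → ℝ) (x : ℝ) : ℝ := if x = 1 then 0 else h x

lemma mapsI_dropAtOne (hh : MapsI h) : MapsI (dropAtOne h) := by
  intro x hx
  by_cases hx1 : x = 1
  · simp [dropAtOne, hx1]
  · simpa [dropAtOne, hx1] using hh x hx

lemma AbsorbCond.dropAtOne (H : AbsorbCond h f) (hh : MapsI h) (hf : MapsI f) :
    AbsorbCond (dropAtOne h) f := by
  have hnn := fun x hx => (mapsI_dropAtOne hh x hx).1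
  refine ⟨fun x hx y hy hxy => ?_, fun x hx => ?_⟩
  · by_cases hy1 : y = 1
    · simpa [_root_.dropAtOne, hy1] using Or.inr (hnn x hx)
    · have hx1 : x ≠ 1 := fun h1 => hy1 (le_antisymm hy.2 (h1 ▸ hxy))
      simpa [_root_.dropAtOne, hx1, hy1] using H.min_le x hx y hy hxy
  · by_cases hx1 : x = 1
    · subst hx1
      simpa [_root_.dropAtOne] using (hf 1 hx).1.trans (apply_le_fR hf hx ⟨le_rfl, le_rfl⟩)
    · simpa [_root_.dropAtOne, hx1] using H.le_fR x hx

end DropAtOne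

section ModifiedInter

variable {f g : ℝ → ℝ}

lemma mapsI_star (hf : MapsI f) (hg : MapsI g) : MapsI (star f g) := by
  unfold _root_.star
  split_ifs
  · exact hg
  · exact hf
  · exact mapsI_inter hf hg
  · exact mapsI_dropAtOne (mapsI_inter hf hg)

lemma absorbCond_star_left (hf : MapsI f) (hg : MapsI g) : AbsorbCond (star f g) f := by
  unfold _root_.star
  split_ifs with hfi
  · exact absorbCond_of_eqOn_ind1 hg hf hfi
  · exact absorbCond_self hf
  · exact absorbCond_inter_left hf
  · exact (absorbCond_inter_left hf).dropAtOne (mapsI_inter hf hg) hf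

lemma absorbCond_star_right (hf : MapsI f) (hg : MapsI g) : AbsorbCond (star f g) g := by
  unfold _root_.star
  split_ifs with hfi hgi
  · exact absorbCond_self hg
  · exact absorbCond_of_eqOn_ind1 hf hg hgi
  · exact absorbCond_inter_right hg
  · exact (absorbCond_inter_right hg).dropAtOne (mapsI_inter hf hg) hg

lemma exists_pos_of_not_eqOn_ind1 (hf : MapsI f) (hf1 : f 1 = 1)
    (hfi : ¬ EqOn f ind1 (Icc (0:ℝ) 1)) : ∃ x ∈ Ico (0:ℝ) 1, 0 < f x := by
  contrapose! hfi
  intro x hx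
  rcases hx.2.eq_or_lt with rfl | hx1
  · simp [ind1, hf1]
  · rw [ind1, if_neg hx1.ne]
    exact le_antisymm (hfi x ⟨hx.1, hx1⟩) (hf x hx).1

lemma star_not_eqOn_ind1 (hf : MapsI f) (hg : MapsI g) (hfi : ¬ EqOn f ind1 (Icc (0:ℝ) 1))
    (hgi : ¬ EqOn g ind1 (Icc (0:ℝ) 1)) : ¬ EqOn (star f g) ind1 (Icc (0:ℝ) 1) := by
  have h1 : (1:ℝ) ∈ Icc (0:ℝ) 1 := right_mem_Icc.2 zero_le_one
  unfold _root_.star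
  rw [if_neg hfi, if_neg hgi]
  split_ifs with hfg
  · have hf1 : f 1 = 1 := le_antisymm (hf 1 h1).2 (hfg.ge.trans (min_le_left _ _))
    have hg1 : g 1 = 1 := le_antisymm (hg 1 h1).2 (hfg.ge.trans (min_le_right _ _))
    obtain ⟨x, hx, hfx⟩ := exists_pos_of_not_eqOn_ind1 hf hf1 hfi
    obtain ⟨y, hy, hgy⟩ := exists_pos_of_not_eqOn_ind1 hg hg1 hgi
    have hpos : 0 < inter f g (min x y) := (lt_min hfx hgy).trans_le
      (le_inter hf (Ico_subset_Icc_self hx) (Ico_subset_Icc_self hy) rfl)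
    have hxy : min x y < 1 := (min_le_left _ _).trans_lt hx.2
    intro heq
    rw [heq ⟨le_min hx.1 hy.1, hxy.le⟩, ind1, if_neg hxy.ne] at hpos
    exact hpos.false
  · intro heq
    simpa [ind1] using heq h1

end ModifiedInter

theorem stmt_16_general (f g : ℝ → ℝ) (hf : MapsI f) (hg : MapsI g) :
    Set.EqOn (inter (star f g) f) (star f g) (Set.Icc (0:ℝ) 1) ∧
    Set.EqOn (inter (star f g) g) (star f g) (Set.Icc (0:ℝ) 1) ∧
    (¬ Set.EqOn f ind1 (Set.Icc (0:ℝ) 1) → ¬ Set.EqOn g ind1 (Set.Icc (0:ℝ) 1) →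
      ¬ Set.EqOn (star f g) ind1 (Set.Icc (0:ℝ) 1)) :=
  ⟨(absorbCond_star_left hf hg).inter_eqOn (mapsI_star hf hg) hf,
    (absorbCond_star_right hf hg).inter_eqOn (mapsI_star hf hg) hg,
    star_not_eqOn_ind1 hf hg⟩

/-- `f ⋆ g ⊑ f` and `f ⋆ g ⊑ g` (where `h ⊑ k` means `h ⊓ k = h`
on `[0,1]`); in particular, `f ⋆ g ≠ 1_{{1}}` if neither `f` nor `g` is `1_{{1}}`. -/
theorem stmt_16 (f g : ℝ → ℝ) (hf : MapsI f) (hg : MapsI g)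
    (hfn : NormalFn f) (hfc : ConvexFn f) (hgn : NormalFn g) (hgc : ConvexFn g) :
    Set.EqOn (inter (star f g) f) (star f g) (Set.Icc (0:ℝ) 1) ∧
    Set.EqOn (inter (star f g) g) (star f g) (Set.Icc (0:ℝ) 1) ∧
    (¬ Set.EqOn f ind1 (Set.Icc (0:ℝ) 1) → ¬ Set.EqOn g ind1 (Set.Icc (0:ℝ) 1) →
      ¬ Set.EqOn (star f g) ind1 (Set.Icc (0:ℝ) 1)) :=
  stmt_16_general f g hf hg
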